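/- For every T > 0 there exists a constant C₂, independent of n, such that for every integer n ≥ 2, every x ∈ [0,1] and all 0 ≤ s ≤ t ≤ T, ∫ₛᵗ ∫₀¹ (Gⁿ(t-r, x, y))² dy dr ≤ C₂·√(t-s). -/

import Mathlib

/-- `φ_j(x) = √2 sin(jπx)`. -/
noncomputable def phi (j : ℕ) (x : ℝ) : ℝ := Real.sqrt 2 * Real.sin ((j : ℝ) * Real.pi * x)

/-- The eigenvalue `λ_j^n = -4n² sin²(jπ/(2n))` of `n²Aⁿ`. -/
noncomputable def lamN (n j : ℕ) : ℝ :=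
  -4 * (n : ℝ)^2 * (Real.sin ((j : ℝ) * Real.pi / (2 * n)))^2

/-- `k_n(y) = ⌊ny⌋/n`. -/
noncomputable def kn (n : ℕ) (y : ℝ) : ℝ := (⌊(n : ℝ) * y⌋ : ℝ) / n

/-- `φ_j^n`, the piecewise linear interpolation of `φ_j` on the grid `{k/n}`:
for `x ∈ [k/n, (k+1)/n]`, `φ_j^n(x) = φ_j(k/n) + (nx - k)(φ_j((k+1)/n) - φ_j(k/n))`. -/
noncomputable def phiLin (n j : ℕ) (x : ℝ) : ℝ :=
  phi j ((⌊(n : ℝ) * x⌋ : ℝ) / n)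
    + ((n : ℝ) * x - (⌊(n : ℝ) * x⌋ : ℝ))
      * (phi j (((⌊(n : ℝ) * x⌋ : ℝ) + 1) / n) - phi j ((⌊(n : ℝ) * x⌋ : ℝ) / n))

/-- The discretized kernel `Gⁿ(t,x,y) = Σ_{j=1}^{n-1} e^{λ_j^n t} φ_j^n(x) φ_j(k_n(y))`. -/
noncomputable def GN (n : ℕ) (t x y : ℝ) : ℝ :=
  ∑ j ∈ Finset.Icc 1 (n - 1), Real.exp (lamN n j * t) * phiLin n j x * phi j (kn n y)

/-!
The step functions `y ↦ φ_j(k_n(y))`, `1 ≤ j ≤ n - 1`, are orthonormal in `L²(0,1)` because the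
sampled sines `φ_j(k/n)` are discretely orthogonal. Hence
`∫₀¹ Gⁿ(τ,x,y)² dy = Σ_j e^{2λ_j^n τ} φ_j^n(x)²`, where `φ_j^n(x)² ≤ 2` (a convex combination of
values of `φ_j`) and `λ_j^n ≤ -4j²` (Jordan's inequality `sin u ≥ 2u/π`). Integrating in time bounds
the `j`-th term by `2 min(t - s, 1/j²)`, and splitting the sum at `j ≈ (t - s)^{-1/2}` gives
`Σ_j min(t - s, 1/j²) ≤ 3 √(t - s)`, so one may take `C₂ = 6`.
-/

open Real Finset MeasureTheory

lemma abs_phi_le (j : ℕ) (x : ℝ) : |phi j x| ≤ √2 := by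
  rw [phi, abs_mul, abs_of_nonneg (sqrt_nonneg 2)]
  exact mul_le_of_le_one_right (sqrt_nonneg 2) (abs_sin_le_one _)

lemma phi_mul_phi (i j : ℕ) (z : ℝ) :
    phi i z * phi j z = cos ((i - j : ℝ) * π * z) - cos ((i + j : ℝ) * π * z) := by
  have h := two_mul_sin_mul_sin (i * π * z) (j * π * z)
  rw [phi, phi, show (i - j : ℝ) * π * z = i * π * z - j * π * z by ring,
    show (i + j : ℝ) * π * z = i * π * z + j * π * z by ring, ← h]
  linear_combination (sin (i * π * z) * sin (j * π * z)) * mul_self_sqrt (zero_le_two (α := ℝ))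

lemma two_mul_sin_half_mul_sum_range_cos (θ : ℝ) (n : ℕ) :
    2 * sin (θ / 2) * ∑ k ∈ range n, cos (k * θ) = sin (n * θ - θ / 2) + sin (θ / 2) := by
  rw [mul_sum]
  have := sum_range_sub (fun k : ℕ => sin (k * θ - θ / 2)) n
  simp only [Nat.cast_zero, zero_mul, zero_sub, sin_neg, sub_neg_eq_add] at this
  rw [← this]
  refine sum_congr rfl fun k _ => ?_
  rw [sin_sub_sin]
  push_cast
  ring_nf

lemma sum_range_cos_nat_mul_pi_div {n m : ℕ} (hm0 : 0 < m) (hm : m < 2 * n) :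
    ∑ k ∈ range n, cos (m * π * k / n) = (1 - (-1) ^ m) / 2 := by
  have hn : (0 : ℝ) < n := by exact_mod_cast (show 0 < n by omega)
  have hsin : sin (m * π / n / 2) ≠ 0 := by
    refine (sin_pos_of_pos_of_lt_pi (by positivity) ?_).ne'
    rw [div_div, div_lt_iff₀ (by positivity)]
    have : (m : ℝ) < 2 * n := by exact_mod_cast hm
    nlinarith [pi_pos]
  have h := two_mul_sin_half_mul_sum_range_cos (m * π / n) n
  rw [mul_div_cancel₀ _ hn.ne', sin_nat_mul_pi_sub] at h
  have hsum : ∑ k ∈ range n, cos (m * π * k / n) = ∑ k ∈ range n, cos (k * (m * π / n)) :=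
    sum_congr rfl fun k _ => by ring_nf
  rw [hsum]
  apply mul_left_cancel₀ (mul_ne_zero two_ne_zero hsin)
  rw [h]
  ring

lemma sum_range_phi_mul_phi {n i j : ℕ} (hi0 : 0 < i) (hin : i < n) (hj0 : 0 < j) (hjn : j < n) :
    ∑ k ∈ range n, phi i (k / n) * phi j (k / n) = if i = j then (n : ℝ) else 0 := by
  wlog hji : j ≤ i generalizing i j
  · simpa only [mul_comm, eq_comm] using this hj0 hjn hi0 hin (by omega)
  have hcos (m : ℕ) (hm0 : 0 < m) (hm : m < 2 * n) :
      ∑ k ∈ range n, cos ((m : ℝ) * π * (k / n)) = (1 - (-1) ^ m) / 2 := by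
    rw [← sum_range_cos_nat_mul_pi_div hm0 hm]
    exact sum_congr rfl fun k _ => by rw [mul_div_assoc]
  simp_rw [phi_mul_phi, sum_sub_distrib]
  have hplus := hcos (i + j) (by omega) (by omega)
  push_cast at hplus
  rw [hplus]
  rcases hji.eq_or_lt with rfl | hlt
  · simp [← two_mul, pow_mul]
  · have hminus := hcos (i - j) (by omega) (by omega)
    rw [Nat.cast_sub hji] at hminus
    have hpar : (-1 : ℝ) ^ (i + j) = (-1) ^ (i - j) := by
      rw [show i + j = i - j + 2 * j by omega, pow_add, pow_mul]
      norm_num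
    rw [hminus, hpar, if_neg hlt.ne', sub_self]

lemma kn_eq_of_mem_Ico {n k : ℕ} (hn : 0 < n) {y : ℝ} (hy : y ∈ Set.Ico (k / n : ℝ) ((k + 1) / n)) :
    kn n y = k / n := by
  have hn' : (0 : ℝ) < n := by exact_mod_cast hn
  rw [Set.mem_Ico, div_le_iff₀ hn', lt_div_iff₀ hn'] at hy
  have hfloor : ⌊(n : ℝ) * y⌋ = k := by
    rw [Int.floor_eq_iff]
    push_cast
    constructor <;> linarith
  rw [kn, hfloor, Int.cast_natCast]

lemma integral_comp_kn {n : ℕ} (hn : 0 < n) (F : ℝ → ℝ) :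
    ∫ y in (0 : ℝ)..1, F (kn n y) = (∑ k ∈ range n, F (k / n)) / n := by
  have hn' : (0 : ℝ) < n := by exact_mod_cast hn
  have hle (k : ℕ) : (k / n : ℝ) ≤ (k + 1 : ℕ) / n := by gcongr; simp
  have hpiece (k : ℕ) :
      Set.EqOn (fun y => F (kn n y)) (fun _ => F (k / n)) (Set.Ioo (k / n : ℝ) ((k + 1 : ℕ) / n)) :=
    fun y hy => by
      dsimp only
      rw [kn_eq_of_mem_Ico hn (by push_cast at hy ⊢; exact Set.Ioo_subset_Ico_self hy)]
  have hint (k : ℕ) : IntervalIntegrable (fun y => F (kn n y)) volume (k / n) ((k + 1 : ℕ) / n) :=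
    intervalIntegrable_const.congr_uIoo (by rw [Set.uIoo_of_le (hle k)]; exact (hpiece k).symm)
  calc ∫ y in (0 : ℝ)..1, F (kn n y)
      = ∫ y in ((0 : ℕ) / n : ℝ)..((n : ℕ) / n : ℝ), F (kn n y) := by
        rw [Nat.cast_zero, zero_div, div_self hn'.ne']
    _ = ∑ k ∈ range n, ∫ y in (k / n : ℝ)..((k + 1 : ℕ) / n), F (kn n y) :=
        (intervalIntegral.sum_integral_adjacent_intervals fun k _ => hint k).symm
    _ = ∑ k ∈ range n, F (k / n) / n := by
        refine sum_congr rfl fun k _ => ?_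
        rw [intervalIntegral.integral_congr_Ioo_of_le (hle k) (hpiece k),
          intervalIntegral.integral_const, smul_eq_mul]
        push_cast
        field_simp
        ring
    _ = (∑ k ∈ range n, F (k / n)) / n := (sum_div ..).symm

lemma integral_sq_sum_mul_phi_kn {n : ℕ} (hn : 0 < n) (c : ℕ → ℝ) :
    ∫ y in (0 : ℝ)..1, (∑ j ∈ Icc 1 (n - 1), c j * phi j (kn n y)) ^ 2
      = ∑ j ∈ Icc 1 (n - 1), c j ^ 2 := by
  have hn' : (n : ℝ) ≠ 0 := by exact_mod_cast hn.ne'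
  rw [integral_comp_kn hn (fun z => (∑ j ∈ Icc 1 (n - 1), c j * phi j z) ^ 2)]
  calc (∑ k ∈ range n, (∑ j ∈ Icc 1 (n - 1), c j * phi j (k / n)) ^ 2) / n
      = (∑ i ∈ Icc 1 (n - 1), ∑ j ∈ Icc 1 (n - 1),
          c i * c j * ∑ k ∈ range n, phi i (k / n) * phi j (k / n)) / n := by
        simp_rw [sq, sum_mul_sum, mul_sum]
        rw [sum_comm]
        refine congrArg (· / _) (sum_congr rfl fun i _ => ?_)
        rw [sum_comm]
        exact sum_congr rfl fun j _ => sum_congr rfl fun k _ => by ring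
    _ = (∑ i ∈ Icc 1 (n - 1), c i ^ 2 * n) / n := by
        refine congrArg (· / _) (sum_congr rfl fun i hi => ?_)
        have hi' := mem_Icc.mp hi
        rw [sum_congr rfl fun j hj => by
          rw [sum_range_phi_mul_phi (by omega) (by omega) (mem_Icc.mp hj).1 (by grind)]]
        simp_rw [mul_ite, mul_zero, sum_ite_eq, if_pos hi, sq]
    _ = ∑ i ∈ Icc 1 (n - 1), c i ^ 2 := by rw [← sum_mul, mul_div_cancel_right₀ _ hn']

lemma integral_sq_GN {n : ℕ} (hn : 0 < n) (τ x : ℝ) :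
    ∫ y in (0 : ℝ)..1, GN n τ x y ^ 2
      = ∑ j ∈ Icc 1 (n - 1), phiLin n j x ^ 2 * exp (2 * lamN n j * τ) := by
  simp only [GN]
  rw [integral_sq_sum_mul_phi_kn hn]
  refine sum_congr rfl fun j _ => ?_
  rw [mul_pow, sq (exp _), ← exp_add]
  ring_nf

lemma abs_phiLin_le (n j : ℕ) (x : ℝ) : |phiLin n j x| ≤ √2 := by
  rw [phiLin, Int.self_sub_floor]
  set θ := Int.fract ((n : ℝ) * x)
  have hθ0 : 0 ≤ θ := Int.fract_nonneg _
  have hθ1 : 0 ≤ 1 - θ := sub_nonneg.mpr (Int.fract_lt_one _).le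
  set A := phi j (⌊(n : ℝ) * x⌋ / n)
  set B := phi j ((⌊(n : ℝ) * x⌋ + 1) / n)
  calc |A + θ * (B - A)| = |(1 - θ) * A + θ * B| := by ring_nf
    _ ≤ (1 - θ) * |A| + θ * |B| := by
        refine (abs_add_le _ _).trans_eq ?_
        rw [abs_mul, abs_mul, abs_of_nonneg hθ1, abs_of_nonneg hθ0]
    _ ≤ (1 - θ) * √2 + θ * √2 :=
        add_le_add (mul_le_mul_of_nonneg_left (abs_phi_le j _) hθ1)
          (mul_le_mul_of_nonneg_left (abs_phi_le j _) hθ0)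
    _ = √2 := by ring

lemma phiLin_sq_le (n j : ℕ) (x : ℝ) : phiLin n j x ^ 2 ≤ 2 := by
  rw [← sq_abs, ← sq_sqrt zero_le_two]
  exact pow_le_pow_left₀ (abs_nonneg _) (abs_phiLin_le n j x) 2

lemma lamN_le {n j : ℕ} (hn : 0 < n) (hjn : j ≤ n) : lamN n j ≤ -4 * j ^ 2 := by
  have hn' : (0 : ℝ) < n := by exact_mod_cast hn
  have hjn' : (j : ℝ) ≤ n := by exact_mod_cast hjn
  have hjordan := mul_le_sin (x := j * π / (2 * n)) (by positivity) (by
    rw [div_le_div_iff₀ (by positivity) two_pos]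
    nlinarith [pi_pos])
  rw [show 2 / π * (j * π / (2 * n)) = (j / n : ℝ) by field_simp] at hjordan
  calc lamN n j ≤ -4 * n ^ 2 * (j / n : ℝ) ^ 2 := by
        rw [lamN]
        exact mul_le_mul_of_nonpos_left (pow_le_pow_left₀ (by positivity) hjordan 2)
          (by nlinarith)
    _ = -4 * j ^ 2 := by field_simp

lemma integral_exp_mul_sub_eq {μ : ℝ} (hμ : μ ≠ 0) (s t : ℝ) :
    ∫ r in s..t, exp (μ * (t - r)) = (1 - exp (μ * (t - s))) / -μ := by
  rw [intervalIntegral.integral_comp_sub_left (fun u => exp (μ * u)),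
    intervalIntegral.integral_comp_mul_left (fun u => exp u) hμ, integral_exp, sub_self,
    mul_zero, exp_zero, smul_eq_mul]
  field_simp
  ring

lemma integral_exp_mul_sub_le {μ : ℝ} (hμ : μ < 0) (s t : ℝ) :
    ∫ r in s..t, exp (μ * (t - r)) ≤ min (t - s) (-μ)⁻¹ := by
  have hμ' : 0 < -μ := neg_pos.mpr hμ
  rw [integral_exp_mul_sub_eq hμ.ne]
  refine le_min ?_ ?_
  · rw [div_le_iff₀ hμ']
    nlinarith [add_one_le_exp (μ * (t - s))]
  · rw [div_eq_mul_inv]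
    exact mul_le_of_le_one_left (inv_nonneg.mpr hμ'.le) (by linarith [exp_pos (μ * (t - s))])

lemma integral_exp_two_mul_lamN_le {n j : ℕ} (hj0 : 0 < j) (hjn : j ≤ n) (s t : ℝ) :
    ∫ r in s..t, exp (2 * lamN n j * (t - r)) ≤ min (t - s) ((j : ℝ) ^ 2)⁻¹ := by
  have hj : (0 : ℝ) < j ^ 2 := by positivity
  have hlam := lamN_le (by omega : 0 < n) hjn
  refine (integral_exp_mul_sub_le (by linarith) s t).trans (min_le_min_left _ ?_)
  exact inv_anti₀ hj (by linarith)

lemma sum_min_inv_sq_le (m : ℕ) {τ : ℝ} (hτ : 0 ≤ τ) :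
    ∑ j ∈ Icc 1 m, min τ ((j : ℝ) ^ 2)⁻¹ ≤ 3 * √τ := by
  rcases hτ.eq_or_lt with rfl | hτ
  · simp
  have hsq : 0 < √τ := sqrt_pos.mpr hτ
  set N := ⌊(√τ)⁻¹⌋₊
  have hN : (N : ℝ) ≤ (√τ)⁻¹ := Nat.floor_le (by positivity)
  have hN1 : (√τ)⁻¹ < N + 1 := Nat.lt_floor_add_one _
  have hsplit : Icc 1 m ⊆ Icc 1 N ∪ Ioo N (m + 1) := fun j hj => by
    simp only [mem_union, mem_Icc, mem_Ioo] at hj ⊢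
    omega
  have hdisj : Disjoint (Icc 1 N) (Ioo N (m + 1)) :=
    disjoint_left.mpr fun j hj hj' => by simp only [mem_Icc, mem_Ioo] at hj hj'; omega
  calc ∑ j ∈ Icc 1 m, min τ ((j : ℝ) ^ 2)⁻¹
      ≤ ∑ j ∈ Icc 1 N ∪ Ioo N (m + 1), min τ ((j : ℝ) ^ 2)⁻¹ :=
        sum_le_sum_of_subset_of_nonneg hsplit fun _ _ _ => le_min hτ.le (by positivity)
    _ ≤ ∑ j ∈ Icc 1 N, τ + ∑ j ∈ Ioo N (m + 1), ((j : ℝ) ^ 2)⁻¹ := by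
        rw [sum_union hdisj]
        exact add_le_add (sum_le_sum fun _ _ => min_le_left _ _)
          (sum_le_sum fun _ _ => min_le_right _ _)
    _ ≤ N * τ + 2 / (N + 1) := by
        rw [sum_const, Nat.card_Icc, nsmul_eq_mul, Nat.add_sub_cancel]
        gcongr
        exact sum_Ioo_inv_sq_le N (m + 1)
    _ ≤ √τ + 2 * √τ := by
        gcongr
        · calc (N : ℝ) * τ ≤ (√τ)⁻¹ * τ := by gcongr
            _ = √τ := by rw [inv_mul_eq_div, div_eq_iff hsq.ne', mul_self_sqrt hτ.le]
        · rw [div_le_iff₀ (by positivity)]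
          calc (2 : ℝ) = 2 * √τ * (√τ)⁻¹ := by field_simp
            _ ≤ 2 * √τ * (N + 1) := by gcongr
    _ = 3 * √τ := by ring

theorem GN_square_integral_bound_general (T : ℝ) :
    ∃ C₂ : ℝ, ∀ n : ℕ, 2 ≤ n → ∀ x ∈ Set.Icc (0:ℝ) 1, ∀ s t : ℝ,
      0 ≤ s → s ≤ t → t ≤ T →
      (∫ r in s..t, ∫ y in (0:ℝ)..1, (GN n (t - r) x y)^2) ≤ C₂ * Real.sqrt (t - s) := by
  refine ⟨6, fun n hn x _ s t _ hst _ => ?_⟩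
  calc ∫ r in s..t, ∫ y in (0 : ℝ)..1, GN n (t - r) x y ^ 2
      = ∑ j ∈ Icc 1 (n - 1), phiLin n j x ^ 2 * ∫ r in s..t, exp (2 * lamN n j * (t - r)) := by
        simp_rw [integral_sq_GN (by omega : 0 < n)]
        rw [intervalIntegral.integral_finsetSum fun j _ => by
          apply Continuous.intervalIntegrable; fun_prop]
        simp_rw [intervalIntegral.integral_const_mul]
    _ ≤ ∑ j ∈ Icc 1 (n - 1), 2 * min (t - s) ((j : ℝ) ^ 2)⁻¹ := by
        refine sum_le_sum fun j hj => ?_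
        have hj := mem_Icc.mp hj
        exact mul_le_mul (phiLin_sq_le n j x) (integral_exp_two_mul_lamN_le (by omega) (by omega) s t)
          (intervalIntegral.integral_nonneg hst fun _ _ => (exp_pos _).le) zero_le_two
    _ ≤ 6 * √(t - s) := by
        rw [← mul_sum]
        linarith [sum_min_inv_sq_le (n - 1) (sub_nonneg.mpr hst)]

/-- For every `T > 0` there is a constant `C₂` independent of `n` such that
`∫ₛᵗ∫₀¹ (Gⁿ(t-r,x,y))² dy dr ≤ C₂ √(t-s)` for all `x ∈ [0,1]`, `0 ≤ s ≤ t ≤ T`. -/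
theorem GN_square_integral_bound (T : ℝ) (hT : 0 < T) :
    ∃ C₂ : ℝ, ∀ n : ℕ, 2 ≤ n → ∀ x ∈ Set.Icc (0:ℝ) 1, ∀ s t : ℝ,
      0 ≤ s → s ≤ t → t ≤ T →
      (∫ r in s..t, ∫ y in (0:ℝ)..1, (GN n (t - r) x y)^2) ≤ C₂ * Real.sqrt (t - s) :=
  GN_square_integral_bound_general T
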